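/- Consider the ODE system κ' = κ² - C κ^{1+2α} H^{-2α}, H' = -C κ^{2α} H^{1-2α} with 0 < α < 1/2, C > 0. Assume H^{2α}κ^{1-2α} ≥ 3C/(1-2α) holds initially (hence, by the monotonicity lemma, at all later times). Then κ'(t) ≥ (2/3)κ(t)² for all t in the interval of existence, and consequently κ(t) ≥ 1/(κ(0)^{-1} - (2/3)t); in particular κ blows up no later than time 3/(2κ(0)). -/

import Mathlib

/-!
Along the flow, `Q = H^{2α} κ^{1-2α}` satisfies `Q' = κ ((1-2α) Q - C)`, which is positive on the
level set `Q = 3C/(1-2α)`; so `Q` never drops below that level. Since `Q · κ^{1+2α} H^{-2α} = κ²`,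
this bounds the damping term `C κ^{1+2α} H^{-2α}` by `κ²/3`, and the Riccati inequality
`κ' ≥ (2/3) κ²` integrates to `(1/κ)' ≤ -2/3`.
-/

open Set

theorem le_image_of_hasDerivAt_pos_on_level {f f' : ℝ → ℝ} {a b c : ℝ}
    (hf : ∀ t ∈ Icc a b, HasDerivAt f (f' t) t) (hc : ∀ t ∈ Ico a b, f t = c → 0 < f' t)
    (ha : c ≤ f a) : ∀ t ∈ Icc a b, c ≤ f t := by
  intro t ht
  have key := image_le_of_deriv_right_lt_deriv_boundary' (f := fun s => -f s)
    (f' := fun s => -f' s) (B := fun _ => -c) (B' := fun _ => 0)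
    (fun s hs => (hf s hs).neg.continuousAt.continuousWithinAt)
    (fun s hs => (hf s (Ico_subset_Icc_self hs)).neg.hasDerivWithinAt)
    (neg_le_neg ha) continuousOn_const (fun s _ => hasDerivWithinAt_const _ _ _)
    (fun s hs hfs => neg_neg_of_pos (hc s hs (neg_inj.mp hfs))) ht
  exact neg_le_neg_iff.mp key

theorem inv_sub_mul_le_of_mul_sq_le_deriv {κ κ' : ℝ → ℝ} {a b k : ℝ}
    (hpos : ∀ t ∈ Icc a b, 0 < κ t) (hκ : ∀ t ∈ Icc a b, HasDerivAt κ (κ' t) t)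
    (hk : ∀ t ∈ Icc a b, k * κ t ^ 2 ≤ κ' t) :
    ∀ t ∈ Icc a b, ((κ a)⁻¹ - k * (t - a))⁻¹ ≤ κ t := by
  have hg : ∀ t ∈ Icc a b, HasDerivAt (fun s => (κ s)⁻¹ + k * s) (-κ' t / κ t ^ 2 + k) t :=
    fun t ht => (((hκ t ht).inv (hpos t ht).ne').add
      ((hasDerivAt_id' t).const_mul k)).congr_deriv (by rw [mul_one])
  have hanti : AntitoneOn (fun s => (κ s)⁻¹ + k * s) (Icc a b) := by
    refine antitoneOn_of_hasDerivWithinAt_nonpos (convex_Icc a b)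
      (fun t ht => (hg t ht).continuousAt.continuousWithinAt)
      (fun t ht => (hg t (interior_subset ht)).hasDerivWithinAt) fun t ht => ?_
    have ht' := interior_subset ht
    have hsq : 0 < κ t ^ 2 := pow_pos (hpos t ht') 2
    rw [neg_div, neg_add_nonpos_iff, le_div_iff₀ hsq]
    exact hk t ht'
  intro t ht
  have hle : (κ t)⁻¹ ≤ (κ a)⁻¹ - k * (t - a) := by
    have := hanti ⟨le_rfl, ht.1.trans ht.2⟩ ht ht.1
    simp only at this
    linarith
  simpa using inv_anti₀ (inv_pos.mpr (hpos t ht)) hle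

theorem two_thirds_mul_sq_le_of_le_rpow_mul_rpow {x y p C : ℝ} (hp0 : 0 ≤ p) (hp1 : p < 1)
    (hC : 0 < C) (hx : 0 < x) (hy : 0 < y) (hQ : 3 * C / (1 - p) ≤ y ^ p * x ^ (1 - p)) :
    (2 / 3) * x ^ 2 ≤ x ^ 2 - C * x ^ (1 + p) * y ^ (-p) := by
  have hxp : 0 < x ^ p := Real.rpow_pos_of_pos hx p
  have hyp : 0 < y ^ p := Real.rpow_pos_of_pos hy p
  have hQP : y ^ p * x ^ (1 - p) * (x ^ (1 + p) * y ^ (-p)) = x ^ 2 := by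
    rw [Real.rpow_neg hy.le, Real.rpow_sub hx, Real.rpow_add hx, Real.rpow_one]
    field_simp
  have hP : 0 < x ^ (1 + p) * y ^ (-p) :=
    mul_pos (Real.rpow_pos_of_pos hx _) (Real.rpow_pos_of_pos hy _)
  have h3C : 3 * C ≤ y ^ p * x ^ (1 - p) := by
    rw [div_le_iff₀ (by linarith)] at hQ
    nlinarith [Real.rpow_pos_of_pos hx (1 - p)]
  nlinarith [mul_le_mul_of_nonneg_right h3C hP.le]

theorem hasDerivAt_rpow_mul_rpow_of_ode {p C t : ℝ} {κ H : ℝ → ℝ} (hκ : 0 < κ t) (hH : 0 < H t)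
    (hκ' : HasDerivAt κ (κ t ^ 2 - C * κ t ^ (1 + p) * H t ^ (-p)) t)
    (hH' : HasDerivAt H (-(C * κ t ^ p * H t ^ (1 - p))) t) :
    HasDerivAt (fun s => H s ^ p * κ s ^ (1 - p))
      (κ t * ((1 - p) * (H t ^ p * κ t ^ (1 - p)) - C)) t := by
  refine ((hH'.rpow_const (p := p) (Or.inl hH.ne')).mul
    (hκ'.rpow_const (p := 1 - p) (Or.inl hκ.ne'))).congr_deriv ?_
  have : 0 < H t ^ p := Real.rpow_pos_of_pos hH p
  have : 0 < κ t ^ p := Real.rpow_pos_of_pos hκ p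
  simp only [Real.rpow_sub_one hH.ne', Real.rpow_sub_one hκ.ne', Real.rpow_sub hH,
    Real.rpow_sub hκ, Real.rpow_add hκ, Real.rpow_neg hH.le, Real.rpow_one]
  field_simp
  ring

theorem stmt_10_general (α C T : ℝ) (hα0 : 0 < α) (hα : α < 1 / 2) (hC : 0 < C)
    (κ H : ℝ → ℝ)
    (hκpos : ∀ t ∈ Set.Icc (0 : ℝ) T, 0 < κ t)
    (hHpos : ∀ t ∈ Set.Icc (0 : ℝ) T, 0 < H t)
    (hκode : ∀ t ∈ Set.Icc (0 : ℝ) T,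
      HasDerivAt κ (κ t ^ 2 - C * κ t ^ (1 + 2 * α) * H t ^ (-(2 * α))) t)
    (hHode : ∀ t ∈ Set.Icc (0 : ℝ) T,
      HasDerivAt H (-(C * κ t ^ (2 * α) * H t ^ (1 - 2 * α))) t)
    (hinit : 3 * C / (1 - 2 * α) ≤ H 0 ^ (2 * α) * κ 0 ^ (1 - 2 * α)) :
    (∀ t ∈ Set.Icc (0 : ℝ) T,
      (2 / 3) * κ t ^ 2 ≤ κ t ^ 2 - C * κ t ^ (1 + 2 * α) * H t ^ (-(2 * α))) ∧
    (∀ t ∈ Set.Icc (0 : ℝ) T, 1 / ((κ 0)⁻¹ - (2 / 3) * t) ≤ κ t) := by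
  have hp : 0 < 1 - 2 * α := by linarith
  have hQ : ∀ t ∈ Icc (0 : ℝ) T, 3 * C / (1 - 2 * α) ≤ H t ^ (2 * α) * κ t ^ (1 - 2 * α) := by
    refine le_image_of_hasDerivAt_pos_on_level (fun t ht => hasDerivAt_rpow_mul_rpow_of_ode
      (hκpos t ht) (hHpos t ht) (hκode t ht) (hHode t ht)) (fun t ht hlevel => ?_) hinit
    rw [hlevel, mul_div_cancel₀ _ hp.ne']
    nlinarith [hκpos t (Ico_subset_Icc_self ht)]
  have hriccati : ∀ t ∈ Icc (0 : ℝ) T,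
      (2 / 3) * κ t ^ 2 ≤ κ t ^ 2 - C * κ t ^ (1 + 2 * α) * H t ^ (-(2 * α)) := fun t ht =>
    two_thirds_mul_sq_le_of_le_rpow_mul_rpow (by linarith) (by linarith) hC (hκpos t ht)
      (hHpos t ht) (hQ t ht)
  refine ⟨hriccati, fun t ht => ?_⟩
  simpa using inv_sub_mul_le_of_mul_sq_le_deriv hκpos hκode hriccati t ht

/-- For the ODE system `κ' = κ² - C κ^{1+2α} H^{-2α}`, `H' = -C κ^{2α} H^{1-2α}` with
`H^{2α}κ^{1-2α} ≥ 3C/(1-2α)` initially, one has `κ' ≥ (2/3)κ²`, hence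
`κ(t) ≥ 1/(κ(0)⁻¹ - (2/3)t)`. -/
theorem stmt_10 (α C T : ℝ) (hα0 : 0 < α) (hα : α < 1 / 2) (hC : 0 < C) (hT : 0 < T)
    (κ H : ℝ → ℝ)
    (hκpos : ∀ t ∈ Set.Icc (0 : ℝ) T, 0 < κ t)
    (hHpos : ∀ t ∈ Set.Icc (0 : ℝ) T, 0 < H t)
    (hκode : ∀ t ∈ Set.Icc (0 : ℝ) T,
      HasDerivAt κ (κ t ^ 2 - C * κ t ^ (1 + 2 * α) * H t ^ (-(2 * α))) t)
    (hHode : ∀ t ∈ Set.Icc (0 : ℝ) T,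
      HasDerivAt H (-(C * κ t ^ (2 * α) * H t ^ (1 - 2 * α))) t)
    (hinit : 3 * C / (1 - 2 * α) ≤ H 0 ^ (2 * α) * κ 0 ^ (1 - 2 * α)) :
    (∀ t ∈ Set.Icc (0 : ℝ) T,
      (2 / 3) * κ t ^ 2 ≤ κ t ^ 2 - C * κ t ^ (1 + 2 * α) * H t ^ (-(2 * α))) ∧
    (∀ t ∈ Set.Icc (0 : ℝ) T, 1 / ((κ 0)⁻¹ - (2 / 3) * t) ≤ κ t) :=
  stmt_10_general α C T hα0 hα hC κ H hκpos hHpos hκode hHode hinit
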